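/- arXiv:1902.11239 — 3 statements merged into one kernel-verified Lean document; each statement's English description precedes it below -/
import Mathlib

section
/- Let π_1, π_2, …, π_L be a chain of partitions of {1,…,n} in which π_1 is the one-cell partition, π_L is the partition into singletons, and each π_{k+1} arises from π_k by splitting one cell into two nonempty cells. Then Σ_{k=1}^{L−1} ([H(π_{k+1}) − H(π_k)] − [R(π_k) − R(π_{k+1})]) = Ω(X^n); moreover each summand equals an interaction information of three vector-valued random variables: if π_{k+1} splits the cell α of π_k into β and β', and the remaining cells of π_k are γ_1,…,γ_r, then the k-th summand equals I(X^β; X^{β'}) − I(X^β; X^{β'} | X^{γ_1},…,X^{γ_r}). -/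
open Finset

noncomputable section

variable {Ω : Type*} [Fintype Ω]

/-- Probability of the event `A ⊆ Ω` under the probability mass function `p`. -/
def probOf (p : Ω → ℝ) (A : Finset Ω) : ℝ := ∑ ω ∈ A, p ω

/-- Shannon entropy (in bits, i.e. logarithm base 2) of the discrete random
variable `X` defined on the finite probability space with mass function `p`. -/
def shEnt {S : Type*} [Fintype S] [DecidableEq S] (p : Ω → ℝ) (X : Ω → S) : ℝ :=
  -∑ s : S, probOf p (univ.filter fun ω => X ω = s) *
      Real.logb 2 (probOf p (univ.filter fun ω => X ω = s))

/-- Mutual information `I(X;Y)`. -/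
def mutInfo {S T : Type*} [Fintype S] [DecidableEq S] [Fintype T] [DecidableEq T]
    (p : Ω → ℝ) (X : Ω → S) (Y : Ω → T) : ℝ :=
  shEnt p X + shEnt p Y - shEnt p (fun ω => (X ω, Y ω))

/-- Conditional mutual information `I(X;Y∣Z)`. -/
def condMutInfo {S T U : Type*} [Fintype S] [DecidableEq S] [Fintype T] [DecidableEq T]
    [Fintype U] [DecidableEq U] (p : Ω → ℝ) (X : Ω → S) (Y : Ω → T) (Z : Ω → U) : ℝ :=
  shEnt p (fun ω => (X ω, Z ω)) + shEnt p (fun ω => (Y ω, Z ω))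
    - shEnt p (fun ω => (X ω, Y ω, Z ω)) - shEnt p Z

variable {n : ℕ} {S : Fin n → Type*} [∀ i, Fintype (S i)] [∀ i, DecidableEq (S i)]

/-- The sub-vector `X^γ` of the tuple of random variables `X`. -/
def restrict (X : ∀ i, Ω → S i) (γ : Finset (Fin n)) : Ω → ∀ i : γ, S i.1 :=
  fun ω i => X i.1 ω

/-- Joint Shannon entropy `H(X^γ)` of the sub-vector indexed by `γ`. -/
def subEnt (p : Ω → ℝ) (X : ∀ i, Ω → S i) (γ : Finset (Fin n)) : ℝ :=
  shEnt p (restrict X γ)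

/-- Total correlation `C(X^γ)`: sum of marginal entropies minus joint entropy. -/
def totCorr (p : Ω → ℝ) (X : ∀ i, Ω → S i) (γ : Finset (Fin n)) : ℝ :=
  (∑ i ∈ γ, shEnt p (X i)) - subEnt p X γ

/-- Binding entropy `B(X^γ)`: joint entropy minus the sum of the residual
entropies `R_j = H(X_j ∣ X^γ_{-j})` (each conditional entropy being a
difference of joint entropies). -/
def bindEnt (p : Ω → ℝ) (X : ∀ i, Ω → S i) (γ : Finset (Fin n)) : ℝ :=
  subEnt p X γ - ∑ i ∈ γ, (subEnt p X γ - subEnt p X (γ.erase i))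

/-- The O-information `Ω(X^γ) = C(X^γ) - B(X^γ)`. -/
def oInfo (p : Ω → ℝ) (X : ∀ i, Ω → S i) (γ : Finset (Fin n)) : ℝ :=
  totCorr p X γ - bindEnt p X γ

/-- `π` is a partition of `{1,…,n}`: nonempty pairwise disjoint cells covering everything. -/
def IsPartition {n : ℕ} (π : Finset (Finset (Fin n))) : Prop :=
  (∀ α ∈ π, α.Nonempty) ∧ (π : Set (Finset (Fin n))).PairwiseDisjoint id ∧
    π.sup id = Finset.univ

/-- `πb` is obtained from `πa` by splitting exactly one cell `α` of `πa` into
two nonempty (disjoint) cells `β` and `β'`. -/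
def ElemRefinement {n : ℕ} (πa πb : Finset (Finset (Fin n))) : Prop :=
  ∃ α β β', α ∈ πa ∧ β.Nonempty ∧ β'.Nonempty ∧ Disjoint β β' ∧ β ∪ β' = α ∧
    πb = insert β (insert β' (πa.erase α))

/-- Partition entropy `H(π) = Σ_{α ∈ π} H(X^α)`. -/
def partEnt (p : Ω → ℝ) (X : ∀ i, Ω → S i) (π : Finset (Finset (Fin n))) : ℝ :=
  ∑ α ∈ π, subEnt p X α

/-- Partition residual entropy `R(π) = Σ_{α ∈ π} H(X^α ∣ X^{other cells})`,
each conditional entropy written as a difference of joint entropies. -/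
def partRes (p : Ω → ℝ) (X : ∀ i, Ω → S i) (π : Finset (Finset (Fin n))) : ℝ :=
  ∑ α ∈ π, (subEnt p X (α ∪ (π.erase α).sup id) - subEnt p X ((π.erase α).sup id))


section AuxLemmas

variable {Ω : Type*} [Fintype Ω] {n : ℕ} {S : Fin n → Type*}
  [∀ i, Fintype (S i)] [∀ i, DecidableEq (S i)]

lemma shEnt_alt {T : Type*} [Fintype T] [DecidableEq T] (p : Ω → ℝ) (X : Ω → T) :
    shEnt p X =
      -∑ ω : Ω, p ω * Real.logb 2 (probOf p (univ.filter fun ω' => X ω' = X ω)) := by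
  unfold shEnt
  congr 1
  rw [← Finset.sum_fiberwise univ X
    (fun ω => p ω * Real.logb 2 (probOf p (univ.filter fun ω' => X ω' = X ω)))]
  refine Finset.sum_congr rfl fun s _ => ?_
  have h1 : ∀ ω ∈ univ.filter fun ω => X ω = s,
      p ω * Real.logb 2 (probOf p (univ.filter fun ω' => X ω' = X ω))
        = p ω * Real.logb 2 (probOf p (univ.filter fun ω' => X ω' = s)) := by
    intro ω hω
    rw [(Finset.mem_filter.mp hω).2]
  rw [Finset.sum_congr rfl h1, ← Finset.sum_mul]
  rfl

lemma shEnt_congr {T U : Type*} [Fintype T] [DecidableEq T] [Fintype U] [DecidableEq U]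
    (p : Ω → ℝ) (X : Ω → T) (Y : Ω → U)
    (h : ∀ ω ω', X ω = X ω' ↔ Y ω = Y ω') : shEnt p X = shEnt p Y := by
  rw [shEnt_alt, shEnt_alt]
  congr 1
  refine Finset.sum_congr rfl fun ω _ => ?_
  have : (univ.filter fun ω' => X ω' = X ω) = (univ.filter fun ω' => Y ω' = Y ω) := by
    ext ω'; simp [h ω' ω]
  rw [this]

lemma restrict_eq_iff (X : ∀ i, Ω → S i) (γ : Finset (Fin n)) (ω ω' : Ω) :
    restrict X γ ω = restrict X γ ω' ↔ ∀ i ∈ γ, X i ω = X i ω' :=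
  ⟨fun h i hi => congrFun h ⟨i, hi⟩, fun h => funext fun j => h j.1 j.2⟩

lemma shEnt_pair_restrict (p : Ω → ℝ) (X : ∀ i, Ω → S i) (s t : Finset (Fin n)) :
    shEnt p (fun ω => (restrict X s ω, restrict X t ω)) = subEnt p X (s ∪ t) := by
  refine shEnt_congr p _ _ fun ω ω' => ?_
  simp only [Prod.mk.injEq, restrict_eq_iff, Finset.mem_union]
  constructor
  · rintro ⟨h1, h2⟩ i (hi | hi)
    exacts [h1 i hi, h2 i hi]
  · intro h
    exact ⟨fun i hi => h i (Or.inl hi), fun i hi => h i (Or.inr hi)⟩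

lemma shEnt_triple_restrict (p : Ω → ℝ) (X : ∀ i, Ω → S i) (s t u : Finset (Fin n)) :
    shEnt p (fun ω => (restrict X s ω, restrict X t ω, restrict X u ω))
      = subEnt p X (s ∪ (t ∪ u)) := by
  refine shEnt_congr p _ _ fun ω ω' => ?_
  simp only [Prod.mk.injEq, restrict_eq_iff, Finset.mem_union]
  constructor
  · rintro ⟨h1, h2, h3⟩ i (hi | hi | hi)
    exacts [h1 i hi, h2 i hi, h3 i hi]
  · intro h
    exact ⟨fun i hi => h i (Or.inl hi), fun i hi => h i (Or.inr (Or.inl hi)),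
      fun i hi => h i (Or.inr (Or.inr hi))⟩

lemma subEnt_singleton (p : Ω → ℝ) (X : ∀ i, Ω → S i) (i : Fin n) :
    subEnt p X {i} = shEnt p (X i) := by
  refine shEnt_congr p _ _ fun ω ω' => ?_
  rw [restrict_eq_iff]
  constructor
  · intro h
    exact h i (Finset.mem_singleton_self i)
  · intro h j hj
    rw [Finset.mem_singleton] at hj
    subst hj
    exact h

lemma subEnt_empty (p : Ω → ℝ) (hp1 : ∑ ω, p ω = 1) (X : ∀ i, Ω → S i) :
    subEnt p X (∅ : Finset (Fin n)) = 0 := by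
  rw [subEnt, shEnt_alt]
  have h1 : ∀ ω : Ω, (univ.filter fun ω' =>
      restrict X ∅ ω' = restrict X (∅ : Finset (Fin n)) ω) = univ := by
    intro ω
    refine Finset.filter_true_of_mem fun ω' _ => ?_
    funext j
    exact absurd j.2 (Finset.notMem_empty j.1)
  simp only [h1]
  simp [probOf, hp1]

lemma edge_formula (p : Ω → ℝ) (X : ∀ i, Ω → S i)
    (πa πb : Finset (Finset (Fin n))) (α β β' : Finset (Fin n))
    (hα : α ∈ πa) (hβ : β.Nonempty) (hβ' : β'.Nonempty) (hd : Disjoint β β')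
    (hu : β ∪ β' = α) (hb : πb = insert β (insert β' (πa.erase α)))
    (hdisj : (πa : Set (Finset (Fin n))).PairwiseDisjoint id) :
    (partEnt p X πb - partEnt p X πa) - (partRes p X πa - partRes p X πb)
      = mutInfo p (restrict X β) (restrict X β')
        - condMutInfo p (restrict X β) (restrict X β')
            (restrict X ((πa.erase α).sup id)) := by
  classical
  set E := πa.erase α with hEdef
  set γ := E.sup id with hγdef
  have hαE : α ∉ E := Finset.notMem_erase α πa
  have hββ' : β ≠ β' := by
    rintro rfl
    exact hβ.ne_empty (by simpa using disjoint_self.mp hd)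
  have hβα : β ≠ α := by
    rintro rfl
    have hsub : β' ⊆ β := Finset.union_eq_left.mp hu
    exact hβ'.ne_empty (by simpa using disjoint_self.mp (hd.mono_left hsub))
  have hβ'α : β' ≠ α := by
    rintro rfl
    have hsub : β ⊆ β' := Finset.union_eq_right.mp hu
    exact hβ.ne_empty (by simpa using disjoint_self.mp (hd.mono_right hsub))
  have hβE : β ∉ E := by
    intro h
    have hdα : Disjoint β α := hdisj (Finset.mem_coe.mpr (Finset.mem_of_mem_erase h))
      (Finset.mem_coe.mpr hα) hβα
    have : Disjoint β β := hdα.mono_right (hu ▸ Finset.subset_union_left)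
    exact hβ.ne_empty (by simpa using disjoint_self.mp this)
  have hβ'E : β' ∉ E := by
    intro h
    have hdα : Disjoint β' α := hdisj (Finset.mem_coe.mpr (Finset.mem_of_mem_erase h))
      (Finset.mem_coe.mpr hα) hβ'α
    have : Disjoint β' β' := hdα.mono_right (hu ▸ Finset.subset_union_right)
    exact hβ'.ne_empty (by simpa using disjoint_self.mp this)
  have hβins : β ∉ insert β' E := by
    simp [Finset.mem_insert, hββ', hβE]
  have hπa : πa = insert α E := (Finset.insert_erase hα).symm
  have hsupins : ∀ (c : Finset (Fin n)) (F : Finset (Finset (Fin n))),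
      (insert c F).sup id = c ∪ F.sup id := by
    intro c F
    rw [Finset.sup_insert]
    rfl
  have hsup2 : ∀ F : Finset (Finset (Fin n)),
      (insert β (insert β' F)).sup id = α ∪ F.sup id := by
    intro F
    rw [hsupins, hsupins, ← Finset.union_assoc, hu]
  have hbe1 : (insert β (insert β' E)).erase β = insert β' E := Finset.erase_insert hβins
  have hbe2 : (insert β (insert β' E)).erase β' = insert β E := by
    rw [Finset.erase_insert_of_ne hββ', Finset.erase_insert hβ'E]
  have hbe3 : ∀ c ∈ E, (insert β (insert β' E)).erase c
      = insert β (insert β' (E.erase c)) := by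
    intro c hc
    rw [Finset.erase_insert_of_ne (fun h => hβE (by rw [h]; exact hc)),
      Finset.erase_insert_of_ne (fun h => hβ'E (by rw [h]; exact hc))]
  have hae0 : (insert α E).erase α = E := Finset.erase_insert hαE
  have hae : ∀ c ∈ E, (insert α E).erase c = insert α (E.erase c) := fun c hc =>
    Finset.erase_insert_of_ne (fun h => hαE (by rw [h]; exact hc))
  have hPEb : partEnt p X πb = subEnt p X β + (subEnt p X β' + partEnt p X E) := by
    rw [hb]
    unfold partEnt
    rw [Finset.sum_insert hβins, Finset.sum_insert hβ'E]
  have hPEa : partEnt p X πa = subEnt p X α + partEnt p X E := by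
    unfold partEnt
    rw [hπa, Finset.sum_insert hαE]
  have hRb : partRes p X πb = (subEnt p X (β ∪ (β' ∪ γ)) - subEnt p X (β' ∪ γ))
      + ((subEnt p X (β' ∪ (β ∪ γ)) - subEnt p X (β ∪ γ))
      + ∑ c ∈ E, (subEnt p X (c ∪ (α ∪ (E.erase c).sup id))
          - subEnt p X (α ∪ (E.erase c).sup id))) := by
    rw [hb]
    unfold partRes
    rw [Finset.sum_insert hβins, Finset.sum_insert hβ'E]
    congr 1
    · rw [hbe1, hsupins]
    congr 1
    · rw [hbe2, hsupins]
    refine Finset.sum_congr rfl fun c hc => ?_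
    rw [hbe3 c hc, hsup2]
  have hRa : partRes p X πa = (subEnt p X (α ∪ γ) - subEnt p X γ)
      + ∑ c ∈ E, (subEnt p X (c ∪ (α ∪ (E.erase c).sup id))
          - subEnt p X (α ∪ (E.erase c).sup id)) := by
    have : partRes p X πa = partRes p X (insert α E) := by rw [← hπa]
    rw [this]
    unfold partRes
    rw [Finset.sum_insert hαE]
    congr 1
    · rw [hae0]
    refine Finset.sum_congr rfl fun c hc => ?_
    rw [hae c hc, hsupins]
  have hMI : mutInfo p (restrict X β) (restrict X β')
      = subEnt p X β + subEnt p X β' - subEnt p X α := by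
    rw [mutInfo, shEnt_pair_restrict, hu]
    rfl
  have hCMI : condMutInfo p (restrict X β) (restrict X β') (restrict X γ)
      = subEnt p X (β ∪ γ) + subEnt p X (β' ∪ γ)
        - subEnt p X (β ∪ (β' ∪ γ)) - subEnt p X γ := by
    rw [condMutInfo, shEnt_pair_restrict, shEnt_pair_restrict, shEnt_triple_restrict]
    rfl
  have hu1 : β ∪ (β' ∪ γ) = α ∪ γ := by rw [← Finset.union_assoc, hu]
  have hu2 : β' ∪ (β ∪ γ) = α ∪ γ := by
    rw [← Finset.union_assoc, Finset.union_comm β' β, hu]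
  rw [hPEb, hPEa, hRb, hRa, hMI, hCMI, hu1, hu2]
  ring

end AuxLemmas

/-- along any chain of elementary refinements from the one-cell
partition to the singletons, the sum of the edge weights
`[H(π_{k+1})-H(π_k)] - [R(π_k)-R(π_{k+1})]` equals the O-information
`Ω(X^n)`; moreover, the `k`-th summand, for a step splitting the cell `α`
into `β` and `β'`, equals the interaction information
`I(X^β; X^{β'}) - I(X^β; X^{β'} ∣ X^{remaining cells})`. -/
theorem path_sum_eq_oInfo_and_edges_are_interactionInfo
    (hn : 1 ≤ n) (p : Ω → ℝ) (hp : ∀ ω, 0 ≤ p ω) (hp1 : ∑ ω, p ω = 1)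
    (X : ∀ i, Ω → S i) (L : ℕ) (hL : 1 ≤ L)
    (π : ℕ → Finset (Finset (Fin n)))
    (hpart : ∀ k, 1 ≤ k → k ≤ L → IsPartition (π k))
    (hfirst : π 1 = {Finset.univ})
    (hlast : π L = Finset.univ.image fun i => ({i} : Finset (Fin n)))
    (hstep : ∀ k, 1 ≤ k → k < L → ElemRefinement (π k) (π (k + 1))) :
    (∑ k ∈ Finset.Ico 1 L,
        ((partEnt p X (π (k + 1)) - partEnt p X (π k))
          - (partRes p X (π k) - partRes p X (π (k + 1))))
      = oInfo p X Finset.univ)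
    ∧ (∀ k, 1 ≤ k → k < L → ∀ α β β', α ∈ π k → β.Nonempty → β'.Nonempty →
        Disjoint β β' → β ∪ β' = α →
        π (k + 1) = insert β (insert β' ((π k).erase α)) →
        (partEnt p X (π (k + 1)) - partEnt p X (π k))
            - (partRes p X (π k) - partRes p X (π (k + 1)))
          = mutInfo p (restrict X β) (restrict X β')
            - condMutInfo p (restrict X β) (restrict X β')
                (restrict X (((π k).erase α).sup id))) := by
  classical
  have hinj : Function.Injective (fun i : Fin n => ({i} : Finset (Fin n))) :=
    Finset.singleton_injective
  have hsupim : ∀ t : Finset (Fin n),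
      (t.image fun i => ({i} : Finset (Fin n))).sup id = t := by
    intro t
    ext a
    simp [Finset.mem_sup]
  have hPE1 : partEnt p X (π 1) = subEnt p X Finset.univ := by
    rw [hfirst]
    simp [partEnt]
  have hPR1 : partRes p X (π 1) = subEnt p X Finset.univ := by
    rw [hfirst]
    unfold partRes
    rw [Finset.sum_singleton, Finset.erase_singleton]
    simp [Finset.sup_empty, Finset.bot_eq_empty, subEnt_empty p hp1 X]
  have hPEL : partEnt p X (π L) = ∑ i, shEnt p (X i) := by
    rw [hlast]
    unfold partEnt
    rw [Finset.sum_image (fun i _ j _ h => hinj h)]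
    exact Finset.sum_congr rfl fun i _ => subEnt_singleton p X i
  have hPRL : partRes p X (π L)
      = ∑ i, (subEnt p X Finset.univ - subEnt p X (Finset.univ.erase i)) := by
    rw [hlast]
    unfold partRes
    rw [Finset.sum_image (fun i _ j _ h => hinj h)]
    refine Finset.sum_congr rfl fun i _ => ?_
    rw [← Finset.image_erase hinj, hsupim,
      show ({i} ∪ Finset.univ.erase i : Finset (Fin n)) = Finset.univ from by
        ext a; by_cases h : a = i <;> simp [h]]
  have htel : ∑ k ∈ Finset.Ico 1 L,
      ((partEnt p X (π (k + 1)) - partEnt p X (π k))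
        - (partRes p X (π k) - partRes p X (π (k + 1))))
      = (partEnt p X (π L) + partRes p X (π L))
        - (partEnt p X (π 1) + partRes p X (π 1)) := by
    set f : ℕ → ℝ := fun k => partEnt p X (π k) + partRes p X (π k) with hf
    have h1 : ∀ k, (partEnt p X (π (k + 1)) - partEnt p X (π k))
        - (partRes p X (π k) - partRes p X (π (k + 1))) = f (k + 1) - f k := by
      intro k
      simp only [hf]
      ring
    rw [Finset.sum_congr rfl fun k _ => h1 k, Finset.sum_Ico_eq_sum_range]
    have h2 := Finset.sum_range_sub (fun i => f (1 + i)) (L - 1)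
    rw [show 1 + (L - 1) = L from by omega] at h2
    exact h2
  constructor
  · rw [htel, hPE1, hPR1, hPEL, hPRL]
    unfold oInfo totCorr bindEnt
    ring
  · intro k hk1 hkL α β β' hα hβ hβ' hd hu hb
    exact edge_formula p X (π k) (π (k + 1)) α β β' hα hβ hβ' hd hu hb
      (hpart k hk1 (le_of_lt hkL)).2.1
end
end

section
/- The binding entropy satisfies the assembly-path decomposition B(X^n) = I(X_n; X^{n−1}) + Σ_{j=2}^{n−1} I(X_j; X^{j−1} | X^n_{j+1}), where X^{j−1} = (X_1,…,X_{j−1}) and X^n_{j+1} = (X_{j+1},…,X_n). -/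
open Finset

noncomputable section

variable {Ω : Type*} [Fintype Ω]

variable {n : ℕ} {S : Fin n → Type*} [∀ i, Fintype (S i)] [∀ i, DecidableEq (S i)]

lemma shEnt_comp_inj {S T : Type*} [Fintype S] [DecidableEq S] [Fintype T] [DecidableEq T]
    (p : Ω → ℝ) (X : Ω → S) (f : S → T) (hf : Function.Injective f) :
    shEnt p (fun ω => f (X ω)) = shEnt p X := by
  unfold shEnt
  congr 1
  rw [show (univ : Finset T) = univ from rfl]
  rw [← Finset.sum_subset (Finset.subset_univ ((univ : Finset S).image f))
    (by
      intro t _ ht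
      have : (univ.filter fun ω => f (X ω) = t) = ∅ := by
        ext ω
        simp only [Finset.mem_filter, Finset.mem_univ, true_and, Finset.notMem_empty, iff_false]
        intro h
        exact ht (Finset.mem_image.2 ⟨X ω, Finset.mem_univ _, h⟩)
      simp [this, probOf])]
  rw [Finset.sum_image (fun a _ b _ h => hf h)]
  refine Finset.sum_congr rfl fun s _ => ?_
  have : (univ.filter fun ω => f (X ω) = f s) = (univ.filter fun ω => X ω = s) := by
    ext ω; simp [hf.eq_iff]
  rw [this]




lemma shEnt_single (p : Ω → ℝ) (X : ∀ i, Ω → S i) (k : Fin n) :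
    shEnt p (X k) = subEnt p X {k} := by
  have h := shEnt_comp_inj p (restrict X {k})
    (fun v => v ⟨k, Finset.mem_singleton_self k⟩)
    (by
      intro v w h
      funext i
      obtain ⟨i, hi⟩ := i
      obtain rfl := Finset.mem_singleton.1 hi
      exact h)
  exact h

lemma shEnt_pair (p : Ω → ℝ) (X : ∀ i, Ω → S i) (k : Fin n) (A : Finset (Fin n)) :
    shEnt p (fun ω => (X k ω, restrict X A ω)) = subEnt p X (insert k A) := by
  have h := shEnt_comp_inj p (restrict X (insert k A))
    (fun v => ((v ⟨k, Finset.mem_insert_self k A⟩ : S k),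
      (fun i : A => v ⟨i.1, Finset.mem_insert_of_mem i.2⟩)))
    (by
      intro v w h
      funext i
      obtain ⟨i, hi⟩ := i
      rcases Finset.mem_insert.1 hi with rfl | h2
      · exact congrArg Prod.fst h
      · exact congrFun (congrArg Prod.snd h) ⟨i, h2⟩)
  exact h

lemma shEnt_union (p : Ω → ℝ) (X : ∀ i, Ω → S i) (A B : Finset (Fin n)) :
    shEnt p (fun ω => (restrict X A ω, restrict X B ω)) = subEnt p X (A ∪ B) := by
  have h := shEnt_comp_inj p (restrict X (A ∪ B))
    (fun v => ((fun i : A => v ⟨i.1, Finset.mem_union_left _ i.2⟩),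
      (fun i : B => v ⟨i.1, Finset.mem_union_right _ i.2⟩)))
    (by
      intro v w h
      funext i
      obtain ⟨i, hi⟩ := i
      rcases Finset.mem_union.1 hi with h2 | h2
      · exact congrFun (congrArg Prod.fst h) ⟨i, h2⟩
      · exact congrFun (congrArg Prod.snd h) ⟨i, h2⟩)
  exact h

lemma shEnt_triple (p : Ω → ℝ) (X : ∀ i, Ω → S i) (k : Fin n) (A B : Finset (Fin n)) :
    shEnt p (fun ω => (X k ω, restrict X A ω, restrict X B ω))
      = subEnt p X (insert k (A ∪ B)) := by
  have h := shEnt_comp_inj p (restrict X (insert k (A ∪ B)))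
    (fun v => ((v ⟨k, Finset.mem_insert_self _ _⟩ : S k),
      (fun i : A => v ⟨i.1, Finset.mem_insert_of_mem (Finset.mem_union_left _ i.2)⟩),
      (fun i : B => v ⟨i.1, Finset.mem_insert_of_mem (Finset.mem_union_right _ i.2)⟩)))
    (by
      intro v w h
      funext i
      obtain ⟨i, hi⟩ := i
      rcases Finset.mem_insert.1 hi with rfl | h2
      · exact congrArg Prod.fst h
      · rcases Finset.mem_union.1 h2 with h3 | h3
        · exact congrFun (congrArg (fun q => q.2.1) h) ⟨i, h3⟩
        · exact congrFun (congrArg (fun q => q.2.2) h) ⟨i, h3⟩)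
  exact h

lemma tele (g : ℕ → ℝ) (a b : ℕ) (h : a ≤ b) :
    ∑ t ∈ Finset.Ico a b, (g t - g (t + 1)) = g a - g b := by
  induction b, h using Nat.le_induction with
  | base => simp
  | succ b hb ih => rw [Finset.sum_Ico_succ_top (by omega), ih]; ring

/-- the assembly-path decomposition of the binding entropy,
`B(X^n) = I(X_n; X^{n-1}) + Σ_{j=2}^{n-1} I(X_j; X^{j-1} ∣ X^n_{j+1})`
(indices here are 0-based: the last variable has index `n-1`, `X^{j-1}` is the
joint vector of variables with index `< j`, and `X^n_{j+1}` the joint vector of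
variables with index `> j`). -/
theorem bindEnt_assembly_decomposition
    (hn : 2 ≤ n) (p : Ω → ℝ) (hp : ∀ ω, 0 ≤ p ω) (hp1 : ∑ ω, p ω = 1)
    (X : ∀ i, Ω → S i) :
    bindEnt p X Finset.univ
      = mutInfo p (X ⟨n - 1, by omega⟩)
          (restrict X (Finset.univ.filter fun j => j < (⟨n - 1, by omega⟩ : Fin n)))
        + ∑ j ∈ (Finset.univ.erase (⟨0, by omega⟩ : Fin n)).erase ⟨n - 1, by omega⟩,
            condMutInfo p (X j)
              (restrict X (Finset.univ.filter fun k => k < j))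
              (restrict X (Finset.univ.filter fun k => j < k)) := by
  classical
  have hm : n - 1 < n := by omega
  have hz : 0 < n := by omega
  generalize hmq : (⟨n - 1, by omega⟩ : Fin n) = m
  generalize hzq : (⟨0, by omega⟩ : Fin n) = z
  have hmval : (m : ℕ) = n - 1 := by rw [← hmq]
  have hzval : (z : ℕ) = 0 := by rw [← hzq]
  have hzm : z ≠ m := by rw [Ne, Fin.ext_iff, hmval, hzval]; omega
  -- mutual information term
  have hmut : mutInfo p (X m) (restrict X (univ.filter fun j => j < m))
      = subEnt p X {m} + subEnt p X (univ.erase m) - subEnt p X univ := by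
    have e1 : (univ.filter fun j : Fin n => j < m) = univ.erase m := by
      ext x
      simp only [Finset.mem_filter, Finset.mem_univ, true_and, Finset.mem_erase,
        Fin.lt_def, Ne, Fin.ext_iff, hmval, and_true]
      omega
    have e2 : insert m (univ.filter fun j : Fin n => j < m) = univ := by
      ext x
      have := x.isLt
      simp only [Finset.mem_insert, Finset.mem_filter, Finset.mem_univ, true_and,
        Fin.lt_def, Fin.ext_iff, hmval, iff_true]
      omega
    rw [mutInfo, shEnt_single, shEnt_pair, e2, e1]
    rfl
  -- conditional mutual information terms
  have hcmi : ∀ j ∈ (univ.erase z).erase m,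
      condMutInfo p (X j) (restrict X (univ.filter fun k => k < j))
          (restrict X (univ.filter fun k => j < k))
        = (subEnt p X (univ.filter fun k : Fin n => (j : ℕ) ≤ (k : ℕ))
            - subEnt p X (univ.filter fun k : Fin n => (j : ℕ) + 1 ≤ (k : ℕ)))
          + (subEnt p X (univ.erase j) - subEnt p X univ) := by
    intro j hj
    have e1 : insert j (univ.filter fun k : Fin n => j < k)
        = univ.filter fun k : Fin n => (j : ℕ) ≤ (k : ℕ) := by
      ext x
      simp only [Finset.mem_insert, Finset.mem_filter, Finset.mem_univ, true_and,
        Fin.lt_def, Fin.ext_iff]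
      omega
    have e2 : (univ.filter fun k : Fin n => k < j) ∪ (univ.filter fun k : Fin n => j < k)
        = univ.erase j := by
      ext x
      simp only [Finset.mem_union, Finset.mem_filter, Finset.mem_univ, true_and,
        Finset.mem_erase, Ne, Fin.lt_def, Fin.ext_iff, and_true]
      omega
    have e3 : insert j ((univ.filter fun k : Fin n => k < j)
        ∪ (univ.filter fun k : Fin n => j < k)) = univ := by
      ext x
      simp only [Finset.mem_insert, Finset.mem_union, Finset.mem_filter, Finset.mem_univ,
        true_and, Fin.lt_def, Fin.ext_iff, iff_true]
      omega
    have e4 : (univ.filter fun k : Fin n => j < k)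
        = univ.filter fun k : Fin n => (j : ℕ) + 1 ≤ (k : ℕ) := by
      ext x
      simp only [Finset.mem_filter, Finset.mem_univ, true_and, Fin.lt_def]
      omega
    rw [condMutInfo, shEnt_pair, shEnt_union, shEnt_triple, e1, e3, e2]
    have e5 : shEnt p (restrict X (univ.filter fun k : Fin n => j < k))
        = subEnt p X (univ.filter fun k : Fin n => (j : ℕ) + 1 ≤ (k : ℕ)) := by
      rw [← e4]; rfl
    rw [e5]
    ring
  rw [hmut, Finset.sum_congr rfl hcmi, Finset.sum_add_distrib]
  -- telescoping sum
  have htel : ∑ j ∈ (univ.erase z).erase m,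
      (subEnt p X (univ.filter fun k : Fin n => (j : ℕ) ≤ (k : ℕ))
        - subEnt p X (univ.filter fun k : Fin n => (j : ℕ) + 1 ≤ (k : ℕ)))
      = (fun t : ℕ => subEnt p X (univ.filter fun k : Fin n => t ≤ (k : ℕ))) 1
        - (fun t : ℕ => subEnt p X (univ.filter fun k : Fin n => t ≤ (k : ℕ))) (n - 1) := by
    rw [← tele (fun t : ℕ => subEnt p X (univ.filter fun k : Fin n => t ≤ (k : ℕ)))
      1 (n - 1) (by omega)]
    refine Finset.sum_nbij' (fun j : Fin n => (j : ℕ))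
      (fun t => (⟨min t (n - 1), by omega⟩ : Fin n)) ?_ ?_ ?_ ?_ ?_
    · intro a ha
      simp only [Finset.mem_erase, Finset.mem_univ, and_true, Ne, Fin.ext_iff,
        hmval, hzval] at ha
      have := a.isLt
      simp only [Finset.mem_Ico]
      omega
    · intro t ht
      simp only [Finset.mem_Ico] at ht
      simp only [Finset.mem_erase, Finset.mem_univ, and_true, Ne, Fin.ext_iff,
        hmval, hzval]
      omega
    · intro a ha
      have := a.isLt
      simp only [Finset.mem_erase, Finset.mem_univ, and_true, Ne, Fin.ext_iff,
        hmval, hzval] at ha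
      rw [Fin.ext_iff]
      simp only
      omega
    · intro t ht
      simp only [Finset.mem_Ico] at ht
      simp only
      omega
    · intro a ha; rfl
  rw [htel]
  simp only
  have hG1 : (univ.filter fun k : Fin n => 1 ≤ (k : ℕ)) = univ.erase z := by
    ext x
    simp only [Finset.mem_filter, Finset.mem_univ, true_and, Finset.mem_erase, Ne,
      Fin.ext_iff, hzval, and_true]
    omega
  have hGn : (univ.filter fun k : Fin n => n - 1 ≤ (k : ℕ)) = {m} := by
    ext x
    have := x.isLt
    simp only [Finset.mem_filter, Finset.mem_univ, true_and, Finset.mem_singleton,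
      Fin.ext_iff, hmval]
    omega
  rw [hG1, hGn]
  -- final algebra
  rw [bindEnt]
  have hmem : m ∈ univ.erase z := Finset.mem_erase.2 ⟨hzm.symm, Finset.mem_univ _⟩
  rw [← Finset.add_sum_erase _ _ (Finset.mem_univ z),
    ← Finset.add_sum_erase _ _ hmem]
  have hneg : ∑ j ∈ (univ.erase z).erase m, (subEnt p X (univ.erase j) - subEnt p X univ)
      = -∑ j ∈ (univ.erase z).erase m, (subEnt p X univ - subEnt p X (univ.erase j)) := by
    rw [← Finset.sum_neg_distrib]
    exact Finset.sum_congr rfl fun j _ => by ring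
  rw [hneg]
  ring
end
end

section
/- Let X_1,…,X_n each take values in a set of cardinality m ≥ 2, with n ≥ 3. If X_1 is uniform and X_1 = X_2 = … = X_n almost surely, then Ω(X^n) = (n−2) log m; and if X_1,…,X_{n−1} are i.i.d. uniform on ℤ/mℤ and X_n = Σ_{j=1}^{n−1} X_j (mod m) almost surely, then Ω(X^n) = (2−n) log m. -/
open Finset

noncomputable section

variable {Ω : Type*} [Fintype Ω]

variable {n : ℕ} {S : Fin n → Type*} [∀ i, Fintype (S i)] [∀ i, DecidableEq (S i)]

/-! Off a null event, each sub-vector `X^γ` with `γ = [n]` or `γ = [n] ∖ {j}` is an injective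
function of a single uniform variable: of `X_1` when all coordinates agree, and of
`(X_1, …, X_{n-1})` when `X_n` is their sum, since then any `n - 1` coordinates determine the
last one. Hence every joint entropy `H(X^γ)` equals `log m`, resp. `(n - 1) log m`, all residual
entropies vanish, every marginal is uniform, and `Ω(X^n) = n log m - 2 H(X^n)`. -/

variable {p : Ω → ℝ}

theorem probOf_fiber_congr_ae {A : Type*} [DecidableEq A] (hp : ∀ ω, 0 ≤ p ω)
    {E : Ω → Prop} [DecidablePred E] (hE : probOf p (univ.filter fun ω => ¬ E ω) = 0)
    {X Y : Ω → A} (hXY : ∀ ω, E ω → X ω = Y ω) (a : A) :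
    probOf p (univ.filter fun ω => X ω = a) = probOf p (univ.filter fun ω => Y ω = a) := by
  have hnull : ∀ ω, ¬ E ω → p ω = 0 := fun ω hω =>
    (sum_eq_zero_iff_of_nonneg fun ω _ => hp ω).1 hE ω (by simpa using hω)
  unfold probOf
  rw [sum_filter, sum_filter]
  refine sum_congr rfl fun ω _ => ?_
  by_cases hω : E ω
  · rw [hXY ω hω]
  · simp [hnull ω hω]

theorem shEnt_congr_ae {A : Type*} [Fintype A] [DecidableEq A] (hp : ∀ ω, 0 ≤ p ω)
    {E : Ω → Prop} [DecidablePred E] (hE : probOf p (univ.filter fun ω => ¬ E ω) = 0)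
    {X Y : Ω → A} (hXY : ∀ ω, E ω → X ω = Y ω) :
    shEnt p X = shEnt p Y := by
  simp only [shEnt, probOf_fiber_congr_ae hp hE hXY]

theorem shEnt_comp_of_injective {A B : Type*} [Fintype A] [DecidableEq A] [Fintype B]
    [DecidableEq B] {g : A → B} (hg : Function.Injective g) (Y : Ω → A) :
    shEnt p (fun ω => g (Y ω)) = shEnt p Y := by
  unfold shEnt
  congr 1
  refine (Fintype.sum_of_injective g hg _ _ (fun b hb => ?_) fun a => ?_).symm
  · have : (univ.filter fun ω => g (Y ω) = b) = ∅ :=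
      filter_eq_empty_iff.2 fun ω _ h => hb ⟨Y ω, h⟩
    simp [this, probOf]
  · simp only [hg.eq_iff]

theorem shEnt_eq_logb_card_of_uniform {A : Type*} [Fintype A] [DecidableEq A]
    (hp1 : ∑ ω, p ω = 1) {Y : Ω → A} {q : ℝ}
    (hY : ∀ a, probOf p (univ.filter fun ω => Y ω = a) = q) :
    shEnt p Y = Real.logb 2 (Fintype.card A) := by
  have hsum : ∑ a, probOf p (univ.filter fun ω => Y ω = a) = 1 := by
    rw [← hp1, ← sum_fiberwise univ Y p]
    rfl
  simp only [hY, sum_const, card_univ, nsmul_eq_mul] at hsum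
  have hq : q = (Fintype.card A : ℝ)⁻¹ := eq_inv_of_mul_eq_one_right hsum
  have hA : (Fintype.card A : ℝ) ≠ 0 := left_ne_zero_of_mul_eq_one hsum
  simp only [shEnt, hY, hq, sum_const, card_univ, nsmul_eq_mul, Real.logb_inv]
  field_simp

theorem probOf_comp_eq_sum {A B : Type*} [Fintype A] [DecidableEq A] [DecidableEq B]
    (Y : Ω → A) (g : A → B) (b : B) :
    probOf p (univ.filter fun ω => g (Y ω) = b)
      = ∑ a ∈ univ.filter (fun a => g a = b), probOf p (univ.filter fun ω => Y ω = a) := by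
  simp only [probOf]
  rw [sum_fiberwise_eq_sum_filter]
  simp

theorem shEnt_map_of_uniform {A B : Type*} [AddGroup A] [Fintype A] [DecidableEq A]
    [AddGroup B] [Fintype B] [DecidableEq B] (hp1 : ∑ ω, p ω = 1) {Y : Ω → A} {q : ℝ}
    (hY : ∀ a, probOf p (univ.filter fun ω => Y ω = a) = q)
    (f : A →+ B) (hf : Function.Surjective f) :
    shEnt p (fun ω => f (Y ω)) = Real.logb 2 (Fintype.card B) := by
  refine shEnt_eq_logb_card_of_uniform hp1 (q := #{a | f a = 0} * q) fun b => ?_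
  rw [probOf_comp_eq_sum, sum_congr rfl fun a _ => hY a, sum_const, nsmul_eq_mul,
    AddMonoidHom.card_fiber_eq_of_mem_range f (hf b) (hf 0)]

theorem Fintype.eq_of_sum_eq_of_forall_ne {ι A : Type*} [Fintype ι] [AddCommGroup A]
    {u v : ι → A} (i : ι) (hsum : ∑ j, u j = ∑ j, v j) (hne : ∀ j ≠ i, u j = v j) :
    u = v := by
  funext j
  by_cases hj : j = i
  · subst hj
    have hdiff : ∑ k, (u k - v k) = u j - v j :=
      Finset.sum_eq_single j (fun k _ hk => sub_eq_zero.2 (hne k hk)) (by simp)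
    rw [sum_sub_distrib, hsum, sub_self] at hdiff
    exact sub_eq_zero.1 hdiff.symm
  · exact hne j hj

theorem oInfo_univ_eq_of_const (X : ∀ i, Ω → S i) {a b : ℝ}
    (hmarg : ∀ i, shEnt p (X i) = a) (hjoint : subEnt p X univ = b)
    (herase : ∀ i, subEnt p X (univ.erase i) = b) :
    oInfo p X univ = n * a - 2 * b := by
  simp only [oInfo, totCorr, bindEnt, hmarg, hjoint, herase, sub_self, sum_const, card_univ,
    Fintype.card_fin, nsmul_eq_mul]
  ring

theorem subEnt_eq_shEnt_of_ae_eq_comp {A : Type*} [Fintype A] [DecidableEq A]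
    (hp : ∀ ω, 0 ≤ p ω) {E : Ω → Prop} [DecidablePred E]
    (hE : probOf p (univ.filter fun ω => ¬ E ω) = 0) {X : ∀ i, Ω → S i} {Y : Ω → A}
    {G : A → ∀ i, S i} (hXY : ∀ ω, E ω → ∀ i, X i ω = G (Y ω) i) {γ : Finset (Fin n)}
    (hG : Function.Injective fun a (i : γ) => G a i) :
    subEnt p X γ = shEnt p Y := by
  rw [subEnt, ← shEnt_comp_of_injective hG]
  exact shEnt_congr_ae hp hE fun ω hω => funext fun i => hXY ω hω i

theorem oInfo_univ_of_ae_eq_uniform {n : ℕ} [Nontrivial (Fin n)] {T : Type*} [Fintype T]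
    [DecidableEq T] (hp : ∀ ω, 0 ≤ p ω) (hp1 : ∑ ω, p ω = 1) (X : Fin n → Ω → T)
    (z : Fin n) {q : ℝ} (hunif : ∀ a, probOf p (univ.filter fun ω => X z ω = a) = q)
    (hnull : probOf p (univ.filter fun ω => ¬ ∀ i, X i ω = X z ω) = 0) :
    oInfo p (fun i => X i) univ = ((n : ℝ) - 2) * Real.logb 2 (Fintype.card T) := by
  have hz := shEnt_eq_logb_card_of_uniform hp1 hunif
  have hjoint : ∀ γ : Finset (Fin n), γ.Nonempty →
      subEnt p (fun i => X i) γ = Real.logb 2 (Fintype.card T) := fun γ ⟨j, hj⟩ =>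
    (subEnt_eq_shEnt_of_ae_eq_comp hp hnull (G := fun a _ => a) (fun ω h i => h i)
      fun a b h => congrFun h ⟨j, hj⟩).trans hz
  rw [oInfo_univ_eq_of_const _ (fun i => (shEnt_congr_ae hp hnull fun ω h => h i).trans hz)
    (hjoint _ univ_nonempty) fun i => hjoint _ ?_]
  · ring
  · obtain ⟨j, hj⟩ := exists_ne i
    exact ⟨j, mem_erase.2 ⟨hj, mem_univ j⟩⟩

theorem oInfo_univ_of_ae_eq_sum {n : ℕ} [Nontrivial (Fin n)] {A : Type*} [AddCommGroup A]
    [Fintype A] [DecidableEq A] (hp : ∀ ω, 0 ≤ p ω) (hp1 : ∑ ω, p ω = 1) (X : Fin n → Ω → A)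
    (l : Fin n) {q : ℝ}
    (hunif : ∀ v : Fin n → A, probOf p (univ.filter fun ω => ∀ i, i ≠ l → X i ω = v i) = q)
    (hnull : probOf p (univ.filter fun ω => ¬ (X l ω = ∑ i ∈ univ.erase l, X i ω)) = 0) :
    oInfo p (fun i => X i) univ = (2 - (n : ℝ)) * Real.logb 2 (Fintype.card A) := by
  set L := Real.logb 2 (Fintype.card A)
  let Y : Ω → ({i // i ≠ l} → A) := fun ω j => X j ω
  let G : ({i // i ≠ l} → A) → Fin n → A :=
    fun u i => if h : i = l then ∑ j, u j else u ⟨i, h⟩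
  have hXY : ∀ ω, X l ω = ∑ i ∈ univ.erase l, X i ω → ∀ i, X i ω = G (Y ω) i := by
    intro ω hω i
    by_cases h : i = l
    · subst h
      simpa [G, Y, sum_subtype (univ.erase i) (p := fun j => j ≠ i) (by simp)] using hω
    · simp [G, Y, h]
  have hYunif : ∀ u, probOf p (univ.filter fun ω => Y ω = u) = q := by
    intro u
    rw [← hunif fun i => if h : i = l then 0 else u ⟨i, h⟩]
    congr 1
    ext ω
    simp only [mem_filter, mem_univ, true_and, funext_iff, Subtype.forall, Y]
    exact forall_congr' fun i => forall_congr' fun h => by rw [dif_neg h]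
  have hY : shEnt p Y = (n - 1) * L := by
    rw [shEnt_eq_logb_card_of_uniform hp1 hYunif, Fintype.card_fun]
    simp [Fintype.card_subtype_compl, Real.logb_pow, Nat.cast_pred l.pos, L]
  have hjoint : ∀ γ : Finset (Fin n), Function.Injective (fun u (i : γ) => G u i) →
      subEnt p (fun i => X i) γ = (n - 1) * L :=
    fun γ hG => (subEnt_eq_shEnt_of_ae_eq_comp hp hnull hXY hG).trans hY
  have hinj : ∀ γ : Finset (Fin n), (∀ i, i ≠ l → i ∈ γ) →
      Function.Injective (fun u (i : γ) => G u i) :=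
    fun γ hγ u v h => funext fun j => by simpa [G, j.2] using congrFun h ⟨j, hγ j j.2⟩
  have hmarg : ∀ i, shEnt p (X i) = L := by
    intro i
    rw [shEnt_congr_ae hp hnull fun ω hω => hXY ω hω i]
    by_cases h : i = l
    · obtain ⟨j, hj⟩ := exists_ne l
      let sumHom : ({i // i ≠ l} → A) →+ A := ∑ j, Pi.evalAddMonoidHom _ j
      have hsurj : Function.Surjective sumHom :=
        fun a => ⟨Pi.single ⟨j, hj⟩ a, by simp [sumHom]⟩
      have := shEnt_map_of_uniform hp1 hYunif sumHom hsurj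
      simpa [G, h, sumHom] using this
    · have := shEnt_map_of_uniform hp1 hYunif
        (Pi.evalAddMonoidHom (fun _ : {i // i ≠ l} => A) ⟨i, h⟩) (Function.surjective_eval _)
      simp only [G, dif_neg h]
      exact this
  rw [oInfo_univ_eq_of_const _ hmarg (hjoint _ (hinj _ fun i _ => mem_univ i))
    fun i => hjoint _ ?_]
  · ring
  by_cases h : i = l
  · exact hinj _ fun j hj => mem_erase.2 ⟨h ▸ hj, mem_univ j⟩
  · intro u v huv
    refine Fintype.eq_of_sum_eq_of_forall_ne ⟨i, h⟩ ?_ fun j hj => ?_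
    · simpa [G] using congrFun huv ⟨l, mem_erase.2 ⟨Ne.symm h, mem_univ l⟩⟩
    · simpa [G, j.2] using
        congrFun huv ⟨j, mem_erase.2 ⟨fun e => hj (Subtype.ext e), mem_univ _⟩⟩

/-- for variables over alphabets of cardinality `m ≥ 2` and
`n ≥ 3`: if `X_1` is uniform and `X_1 = … = X_n` almost surely then
`Ω(X^n) = (n-2)·log m`; and if `X_1,…,X_{n-1}` are i.i.d. uniform on `ℤ/mℤ`
and `X_n = Σ_{j<n} X_j (mod m)` almost surely then `Ω(X^n) = (2-n)·log m`
(logarithms base 2; last index is `n-1` in the 0-based indexing used here). -/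
theorem oInfo_extremes_general_alphabet
    (p : Ω → ℝ) (hp : ∀ ω, 0 ≤ p ω) (hp1 : ∑ ω, p ω = 1)
    (n m : ℕ) [NeZero m] (hn : 3 ≤ n) :
    (∀ (T : Type) [Fintype T] [DecidableEq T] (X : Fin n → Ω → T),
        Fintype.card T = m →
        (∀ a : T,
          probOf p (Finset.univ.filter fun ω => X ⟨0, by omega⟩ ω = a) = 1 / (m : ℝ)) →
        probOf p (Finset.univ.filter fun ω => ¬ ∀ i, X i ω = X ⟨0, by omega⟩ ω) = 0 →
        oInfo p (fun i => X i) Finset.univ = ((n : ℝ) - 2) * Real.logb 2 (m : ℝ))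
    ∧ (∀ X : Fin n → Ω → ZMod m,
        (∀ v : Fin n → ZMod m,
          probOf p (Finset.univ.filter fun ω =>
              ∀ i, i ≠ (⟨n - 1, by omega⟩ : Fin n) → X i ω = v i)
            = (1 / (m : ℝ)) ^ (n - 1)) →
        probOf p (Finset.univ.filter fun ω =>
            ¬ (X ⟨n - 1, by omega⟩ ω
                = ∑ i ∈ Finset.univ.erase (⟨n - 1, by omega⟩ : Fin n), X i ω)) = 0 →
        oInfo p (fun i => X i) Finset.univ = (2 - (n : ℝ)) * Real.logb 2 (m : ℝ)) := by
  have : Nontrivial (Fin n) := Fin.nontrivial_iff_two_le.2 (by omega)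
  refine ⟨fun T _ _ X hcard hunif hnull => ?_, fun X hunif hnull => ?_⟩
  · rw [oInfo_univ_of_ae_eq_uniform hp hp1 X _ hunif hnull, hcard]
  · rw [oInfo_univ_of_ae_eq_sum hp hp1 X _ hunif hnull, ZMod.card]
end
end
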